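/- arXiv:1912.01417 — 4 statements merged into one kernel-verified Lean document; each statement's English description precedes it below -/
import Mathlib

section
/- Suppose B ∈ ℝ^{N×d} satisfies the Restricted Isometry Property up to sparsity level 2k with constants δ_k, δ_{2k} ∈ [0,1). Then for every x in the kernel of B with x ≠ 0, and every subset U ⊆ {1,…,d} with |U| = k, we have ‖x_U‖₂ ≤ (δ_{2k}/(1−δ_k)) · (1/√k) · ‖x‖₁, where x_U denotes the restriction of x to coordinates in U (zero elsewhere). -/
open Finset Matrix

noncomputable def l1 {ι : Type*} [Fintype ι] (x : ι → ℝ) : ℝ := ∑ i, |x i|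

noncomputable def l2 {ι : Type*} [Fintype ι] (x : ι → ℝ) : ℝ := Real.sqrt (∑ i, (x i) ^ 2)

open scoped Classical in
/-- `x` has at most `m` nonzero entries. -/
def sparse {ι : Type*} [Fintype ι] (m : ℕ) (x : ι → ℝ) : Prop :=
  (Finset.univ.filter (fun i => x i ≠ 0)).card ≤ m

/-- Restricted Isometry Property at level `m` with constant `δ`. -/
def RIP {N d : ℕ} (A : Matrix (Fin N) (Fin d) ℝ) (m : ℕ) (δ : ℝ) : Prop :=
  ∀ x : Fin d → ℝ, sparse m x →
    (1 - δ) * (l2 x) ^ 2 ≤ (l2 (A.mulVec x)) ^ 2 ∧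
    (l2 (A.mulVec x)) ^ 2 ≤ (1 + δ) * (l2 x) ^ 2

/-- Restriction of a vector to the coordinates in `S` (zero elsewhere). -/
def restr {d : ℕ} (S : Finset (Fin d)) (x : Fin d → ℝ) : Fin d → ℝ :=
  fun i => if i ∈ S then x i else 0

/-!
Let `T₀` hold the `k` coordinates of largest `|x i|` and `T₁, T₂, …` the following blocks of `k`
coordinates in order of decreasing magnitude. The vector `x_U` is dominated by `x_{T₀}`. Since
`B x = 0`, `B x_{T₀} = -∑_{j ≥ 1} B x_{Tⱼ}`, and RIP at level `2k` makes `B` nearly preserve the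
orthogonality of disjointly supported `k`-sparse vectors, so
`(1 - δ_k) ‖x_{T₀}‖² ≤ ‖B x_{T₀}‖² ≤ δ_{2k} ‖x_{T₀}‖ ∑_{j ≥ 1} ‖x_{Tⱼ}‖`.
Every entry on `T_{j+1}` is at most the mean of `|x|` over `T_j`, so
`√k ‖x_{T_{j+1}}‖ ≤ ‖x_{T_j}‖₁`, and summing over `j` bounds the tail by `‖x‖₁ / √k`.
-/

section Norms

variable {ι : Type*} [Fintype ι]

lemma l2_nonneg (x : ι → ℝ) : 0 ≤ l2 x := Real.sqrt_nonneg _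

lemma l1_nonneg (x : ι → ℝ) : 0 ≤ l1 x := sum_nonneg fun i _ => abs_nonneg (x i)

lemma sq_l2 (x : ι → ℝ) : l2 x ^ 2 = x ⬝ᵥ x := by
  rw [l2, Real.sq_sqrt (by positivity), dotProduct]
  simp only [sq]

lemma l2_eq_zero {x : ι → ℝ} : l2 x = 0 ↔ x = 0 := by
  rw [← dotProduct_self_eq_zero, ← sq_l2, sq_eq_zero_iff]

lemma l2_smul (c : ℝ) (x : ι → ℝ) : l2 (c • x) = |c| * l2 x := by
  rw [← Real.sqrt_sq_eq_abs, l2, l2, ← Real.sqrt_mul (sq_nonneg c), mul_sum]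
  simp only [Pi.smul_apply, smul_eq_mul, mul_pow]

lemma l2_neg (x : ι → ℝ) : l2 (-x) = l2 x := by
  simpa using l2_smul (-1) x

lemma sparse_iff {m : ℕ} {x : ι → ℝ} :
    sparse m x ↔ ∃ S : Finset ι, #S ≤ m ∧ ∀ i, x i ≠ 0 → i ∈ S := by
  unfold sparse
  refine ⟨fun h => ⟨_, h, fun i hi => by simpa using hi⟩, fun ⟨S, hS, hxS⟩ => ?_⟩
  exact (card_le_card fun i hi => hxS i (by simpa using hi)).trans hS

lemma sparse.add {m n : ℕ} {u v : ι → ℝ} (hu : sparse m u) (hv : sparse n v) :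
    sparse (m + n) (u + v) := by
  classical
  obtain ⟨S, hS, huS⟩ := sparse_iff.1 hu
  obtain ⟨T, hT, hvT⟩ := sparse_iff.1 hv
  refine sparse_iff.2 ⟨S ∪ T, (card_union_le S T).trans (add_le_add hS hT), fun i hi => ?_⟩
  by_contra hST
  simp only [mem_union, not_or] at hST
  exact hi (by simp [not_not.1 (mt (huS i) hST.1), not_not.1 (mt (hvT i) hST.2)])

lemma sparse.smul {m : ℕ} {x : ι → ℝ} (hx : sparse m x) (c : ℝ) : sparse m (c • x) := by
  obtain ⟨S, hS, hxS⟩ := sparse_iff.1 hx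
  exact sparse_iff.2 ⟨S, hS, fun i hi => hxS i (right_ne_zero_of_mul hi)⟩

lemma sparse.neg {m : ℕ} {x : ι → ℝ} (hx : sparse m x) : sparse m (-x) := by
  simpa using hx.smul (-1)

end Norms

section Restriction

variable {d : ℕ}

lemma sq_l2_restr (S : Finset (Fin d)) (x : Fin d → ℝ) :
    l2 (restr S x) ^ 2 = ∑ i ∈ S, x i ^ 2 := by
  rw [l2, Real.sq_sqrt (by positivity)]
  simp [restr, sum_ite_mem]

lemma l1_restr (S : Finset (Fin d)) (x : Fin d → ℝ) : l1 (restr S x) = ∑ i ∈ S, |x i| := by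
  simp [l1, restr, apply_ite, sum_ite_mem]

lemma sparse_restr {m : ℕ} {S : Finset (Fin d)} (hS : #S ≤ m) (x : Fin d → ℝ) :
    sparse m (restr S x) :=
  sparse_iff.2 ⟨S, hS, fun i hi => by by_contra h; exact hi (if_neg h)⟩

lemma restr_dotProduct_restr_of_disjoint {S T : Finset (Fin d)} (h : Disjoint S T)
    (x y : Fin d → ℝ) : restr S x ⬝ᵥ restr T y = 0 := by
  refine sum_eq_zero fun i _ => ?_
  by_cases hi : i ∈ S
  · simp [restr, disjoint_left.1 h hi]
  · simp [restr, hi]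

end Restriction

namespace RIP

variable {N d m n : ℕ} {B : Matrix (Fin N) (Fin d) ℝ} {δ : ℝ} {u v : Fin d → ℝ}

/-- Polarization: compare `‖B(u + v)‖²` from above with `‖B(u - v)‖²` from below. -/
lemma two_mul_dotProduct_mulVec_le (hR : RIP B (m + n) δ) (hu : sparse m u) (hv : sparse n v) :
    2 * (B *ᵥ u ⬝ᵥ B *ᵥ v) ≤ 2 * (u ⬝ᵥ v) + δ * (l2 u ^ 2 + l2 v ^ 2) := by
  have hplus := (hR (u + v) (hu.add hv)).2
  have hminus := (hR (u - v) (sub_eq_add_neg u v ▸ hu.add hv.neg)).1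
  simp only [sq_l2, mulVec_add, mulVec_sub, add_dotProduct, dotProduct_add, sub_dotProduct,
    dotProduct_sub, dotProduct_comm v u, dotProduct_comm (B *ᵥ v) (B *ᵥ u)] at hplus hminus ⊢
  linarith

lemma dotProduct_mulVec_le (hR : RIP B (m + n) δ) (hu : sparse m u) (hv : sparse n v) :
    B *ᵥ u ⬝ᵥ B *ᵥ v ≤ u ⬝ᵥ v + δ * (l2 u * l2 v) := by
  rcases (l2_nonneg u).eq_or_lt with hu0 | hu0
  · obtain rfl := l2_eq_zero.1 hu0.symm
    simp [← hu0]
  rcases (l2_nonneg v).eq_or_lt with hv0 | hv0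
  · obtain rfl := l2_eq_zero.1 hv0.symm
    simp [← hv0]
  -- rescale `u` and `v` to the same norm `‖u‖ ‖v‖`, where the polarization bound is sharp
  have h := hR.two_mul_dotProduct_mulVec_le (hu.smul (l2 v)) (hv.smul (l2 u))
  simp only [l2_smul, abs_of_pos hu0, abs_of_pos hv0, mulVec_smul, smul_dotProduct,
    dotProduct_smul, smul_eq_mul] at h
  have huv := mul_pos hu0 hv0
  nlinarith

lemma abs_dotProduct_mulVec_sub_le (hR : RIP B (m + n) δ) (hu : sparse m u) (hv : sparse n v) :
    |B *ᵥ u ⬝ᵥ B *ᵥ v - u ⬝ᵥ v| ≤ δ * (l2 u * l2 v) := by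
  have h := hR.dotProduct_mulVec_le hu hv.neg
  simp only [mulVec_neg, dotProduct_neg, l2_neg] at h
  exact abs_sub_le_iff.2 ⟨by linarith [hR.dotProduct_mulVec_le hu hv], by linarith⟩

end RIP

section Rearrangement

variable {ι : Type*} {f : ι → ℝ}

lemma sum_le_sum_of_card_le_of_forall_le [DecidableEq ι] {U S : Finset ι} (hf : ∀ i, 0 ≤ f i)
    (hcard : #U ≤ #S) (hS : ∀ i ∈ S, ∀ j ∉ S, f j ≤ f i) :
    ∑ i ∈ U, f i ≤ ∑ i ∈ S, f i := by
  have hU := sum_inter_add_sum_sdiff U S f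
  have hS' := sum_inter_add_sum_sdiff S U f
  rw [inter_comm] at hS'
  suffices ∑ i ∈ U \ S, f i ≤ ∑ i ∈ S \ U, f i by linarith
  rcases (U \ S).eq_empty_or_nonempty with hempty | hne
  · rw [hempty, sum_empty]
    exact sum_nonneg fun i _ => hf i
  have hsdiff : #(U \ S) ≤ #(S \ U) := by
    have := card_sdiff_add_card_inter U S
    have := card_sdiff_add_card_inter S U
    rw [inter_comm] at this
    omega
  set c := (U \ S).sup' hne f
  have hc : 0 ≤ c := (hf _).trans (le_sup' f hne.choose_spec)
  calc ∑ i ∈ U \ S, f i ≤ #(U \ S) • c := sum_le_card_nsmul _ _ _ fun i hi => le_sup' f hi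
    _ ≤ #(S \ U) • c := nsmul_le_nsmul_left hc hsdiff
    _ ≤ ∑ i ∈ S \ U, f i := card_nsmul_le_sum _ _ _ fun i hi =>
        sup'_le hne f fun j hj => hS i (mem_sdiff.1 hi).1 j (mem_sdiff.1 hj).2

lemma natCast_mul_sum_sq_le_sq_sum_abs {k : ℕ} {S T : Finset ι} (hS : k ≤ #S) (hT : #T ≤ k)
    (hTS : ∀ i ∈ T, ∀ j ∈ S, |f i| ≤ |f j|) :
    k * ∑ i ∈ T, f i ^ 2 ≤ (∑ j ∈ S, |f j|) ^ 2 := by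
  rcases T.eq_empty_or_nonempty with rfl | hne
  · simp only [sum_empty, mul_zero]
    positivity
  set c := T.sup' hne (|f ·|)
  have hc : 0 ≤ c := (abs_nonneg _).trans (le_sup' (|f ·|) hne.choose_spec)
  have hsumT : ∑ i ∈ T, f i ^ 2 ≤ k * c ^ 2 :=
    calc ∑ i ∈ T, f i ^ 2 ≤ #T • c ^ 2 := sum_le_card_nsmul _ _ _ fun i hi => by
          rw [← sq_abs]; exact pow_le_pow_left₀ (abs_nonneg _) (le_sup' (|f ·|) hi) 2
      _ ≤ k * c ^ 2 := by rw [nsmul_eq_mul]; gcongr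
  have hsumS : k * c ≤ ∑ j ∈ S, |f j| :=
    calc (k : ℝ) * c ≤ #S • c := by rw [nsmul_eq_mul]; gcongr
      _ ≤ ∑ j ∈ S, |f j| :=
        card_nsmul_le_sum _ _ _ fun j hj => sup'_le hne _ fun i hi => hTS i hi j hj
  calc k * ∑ i ∈ T, f i ^ 2 ≤ k * (k * c ^ 2) := by gcongr
    _ = (k * c) ^ 2 := by ring
    _ ≤ (∑ j ∈ S, |f j|) ^ 2 := by gcongr

end Rearrangement

section Shells

variable {d : ℕ}

/-- `absRank x i` is the position of `i` when the coordinates are listed by decreasing `|x i|`. -/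
noncomputable def absRank (x : Fin d → ℝ) : Fin d ≃ Fin d :=
  (Tuple.sort fun i => -|x i|).symm

lemma abs_le_abs_of_absRank_le (x : Fin d → ℝ) {i j : Fin d} (h : absRank x i ≤ absRank x j) :
    |x j| ≤ |x i| := by
  simpa [absRank] using Tuple.monotone_sort (fun i => -|x i|) h

noncomputable def shell (x : Fin d → ℝ) (k j : ℕ) : Finset (Fin d) :=
  univ.filter fun i => (absRank x i : ℕ) / k = j

variable {x : Fin d → ℝ} {k : ℕ}

lemma mem_shell {j : ℕ} {i : Fin d} : i ∈ shell x k j ↔ (absRank x i : ℕ) / k = j := by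
  simp [shell]

lemma card_shell (hk : 0 < k) (j : ℕ) : #(shell x k j) = min ((j + 1) * k) d - j * k := by
  have hrange : #(shell x k j) = #((range d).filter (· / k = j)) := by
    refine card_bij (fun i _ => (absRank x i : ℕ)) (fun i hi => ?_)
      (fun i _ i' _ h => (absRank x).injective (Fin.ext h)) (fun r hr => ?_)
    · simp [mem_shell.1 hi]
    · obtain ⟨hrd, hrj⟩ := mem_filter.1 hr
      exact ⟨(absRank x).symm ⟨r, mem_range.1 hrd⟩, by simp [mem_shell, hrj], by simp⟩
  have hIco : (range d).filter (· / k = j) = Ico (j * k) (min ((j + 1) * k) d) := by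
    ext r
    simp only [mem_filter, mem_range, mem_Ico, Nat.div_eq_iff hk, lt_min_iff, add_mul, one_mul]
    omega
  rw [hrange, hIco, Nat.card_Ico]

lemma disjoint_shell {j j' : ℕ} (h : j ≠ j') : Disjoint (shell x k j) (shell x k j') :=
  disjoint_filter.2 fun _ _ hj hj' => h (hj.symm.trans hj')

lemma abs_le_abs_of_mem_shell {j j' : ℕ} (hjj' : j < j') {i i' : Fin d} (hi : i ∈ shell x k j)
    (hi' : i' ∈ shell x k j') : |x i'| ≤ |x i| := by
  rw [mem_shell] at hi hi'
  refine abs_le_abs_of_absRank_le x (le_of_lt ?_)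
  by_contra! h
  exact absurd (Nat.div_le_div_right (c := k) h) (by omega)

lemma card_shell_le (hk : 0 < k) (j : ℕ) : #(shell x k j) ≤ k := by
  rw [card_shell hk, add_one_mul]
  omega

lemma absRank_div_mem_range (x : Fin d → ℝ) (k : ℕ) (i : Fin d) :
    (absRank x i : ℕ) / k ∈ range (d + 1) :=
  mem_range.2 (Nat.lt_succ_of_le ((Nat.div_le_self _ _).trans (absRank x i).isLt.le))

lemma sum_restr_shell (x : Fin d → ℝ) (k : ℕ) :
    ∑ j ∈ range (d + 1), restr (shell x k j) x = x := by
  ext i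
  simp only [Finset.sum_apply, restr, mem_shell, sum_ite_eq, absRank_div_mem_range, if_true]

lemma sum_l1_restr_shell (x : Fin d → ℝ) (k : ℕ) :
    ∑ j ∈ range (d + 1), l1 (restr (shell x k j) x) = l1 x := by
  simp only [l1_restr, shell]
  exact sum_fiberwise_of_maps_to (fun i _ => absRank_div_mem_range x k i) _

end Shells

section Shelling

variable {N d k : ℕ} {B : Matrix (Fin N) (Fin d) ℝ} {x : Fin d → ℝ}

lemma l2_restr_le_l2_restr_shell_zero (hk : 0 < k) {U : Finset (Fin d)} (hU : #U ≤ k) :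
    l2 (restr U x) ≤ l2 (restr (shell x k 0) x) := by
  refine (pow_le_pow_iff_left₀ (l2_nonneg _) (l2_nonneg _) two_ne_zero).1 ?_
  rw [sq_l2_restr, sq_l2_restr]
  refine sum_le_sum_of_card_le_of_forall_le (fun i => sq_nonneg (x i)) ?_ fun i hi j hj => ?_
  · have hUd := card_le_univ U
    rw [Fintype.card_fin] at hUd
    rw [card_shell hk]
    omega
  · exact sq_le_sq.2 (abs_le_abs_of_mem_shell (Nat.pos_of_ne_zero (mt mem_shell.2 hj)) hi
      (mem_shell.2 rfl))

lemma sqrt_mul_l2_restr_shell_succ_le (hk : 0 < k) (j : ℕ) :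
    √k * l2 (restr (shell x k (j + 1)) x) ≤ l1 (restr (shell x k j) x) := by
  rcases (shell x k (j + 1)).eq_empty_or_nonempty with hempty | ⟨i, hi⟩
  · simpa [hempty, restr, l2] using l1_nonneg _
  have hfull : (j + 1) * k ≤ d :=
    ((Nat.div_eq_iff hk).1 (mem_shell.1 hi)).1.trans (absRank x i).isLt.le
  have hcard : k ≤ #(shell x k j) := by
    rw [card_shell hk]
    rw [add_one_mul] at hfull ⊢
    omega
  have h := natCast_mul_sum_sq_le_sq_sum_abs (f := x) hcard (card_shell_le hk (j + 1))
    fun i hi i' hi' => abs_le_abs_of_mem_shell (lt_add_one j) hi' hi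
  rw [← sq_l2_restr, ← l1_restr] at h
  refine (pow_le_pow_iff_left₀ (mul_nonneg (Real.sqrt_nonneg _) (l2_nonneg _))
    (l1_nonneg _) two_ne_zero).1 ?_
  rwa [mul_pow, Real.sq_sqrt k.cast_nonneg]

lemma sqrt_mul_sum_l2_restr_shell_succ_le (hk : 0 < k) (x : Fin d → ℝ) :
    √k * ∑ j ∈ range d, l2 (restr (shell x k (j + 1)) x) ≤ l1 x :=
  calc √k * ∑ j ∈ range d, l2 (restr (shell x k (j + 1)) x)
      = ∑ j ∈ range d, √k * l2 (restr (shell x k (j + 1)) x) := mul_sum _ _ _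
    _ ≤ ∑ j ∈ range d, l1 (restr (shell x k j) x) :=
        sum_le_sum fun j _ => sqrt_mul_l2_restr_shell_succ_le hk j
    _ ≤ ∑ j ∈ range (d + 1), l1 (restr (shell x k j) x) :=
        sum_le_sum_of_subset_of_nonneg (range_subset_range.2 d.le_succ) fun _ _ _ => l1_nonneg _
    _ = l1 x := sum_l1_restr_shell x k

lemma RIP.sq_l2_mulVec_restr_shell_zero_le {δ : ℝ} (hk : 0 < k) (hR : RIP B (2 * k) δ)
    (hx : B *ᵥ x = 0) :
    l2 (B *ᵥ restr (shell x k 0) x) ^ 2 ≤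
      δ * l2 (restr (shell x k 0) x) * ∑ j ∈ range d, l2 (restr (shell x k (j + 1)) x) := by
  set y := restr (shell x k 0) x
  set z := fun j => restr (shell x k (j + 1)) x
  have hsparse : ∀ j, sparse k (restr (shell x k j) x) := fun j =>
    sparse_restr (card_shell_le hk j) x
  have hBy : B *ᵥ y = -∑ j ∈ range d, B *ᵥ z j := by
    have h := congrArg (B *ᵥ ·) (sum_restr_shell x k)
    simp only [sum_range_succ', mulVec_add, mulVec_sum, hx] at h
    exact eq_neg_of_add_eq_zero_right h
  have hR' : RIP B (k + k) δ := two_mul k ▸ hR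
  calc l2 (B *ᵥ y) ^ 2 = ∑ j ∈ range d, -(B *ᵥ y ⬝ᵥ B *ᵥ z j) := by
        rw [sq_l2]
        nth_rewrite 2 [hBy]
        rw [dotProduct_neg, dotProduct_sum, sum_neg_distrib]
    _ ≤ ∑ j ∈ range d, δ * (l2 y * l2 (z j)) := sum_le_sum fun j _ => by
        have h := hR'.abs_dotProduct_mulVec_sub_le (hsparse 0) (hsparse (j + 1))
        rw [restr_dotProduct_restr_of_disjoint (disjoint_shell j.succ_ne_zero.symm), sub_zero] at h
        exact (neg_le_abs _).trans h
    _ = δ * l2 y * ∑ j ∈ range d, l2 (z j) := by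
        rw [mul_sum]
        simp only [mul_assoc]

lemma RIP.one_sub_mul_sqrt_mul_l2_restr_shell_zero_le {δk δ2k : ℝ} (hk : 0 < k)
    (hRk : RIP B k δk) (hR2k : RIP B (2 * k) δ2k) (hδ2k : 0 ≤ δ2k) (hx : B *ᵥ x = 0) :
    (1 - δk) * √k * l2 (restr (shell x k 0) x) ≤ δ2k * l1 x := by
  set y := restr (shell x k 0) x
  set tail := ∑ j ∈ range d, l2 (restr (shell x k (j + 1)) x)
  have hlower := (hRk y (sparse_restr (card_shell_le hk 0) x)).1
  have hupper := hR2k.sq_l2_mulVec_restr_shell_zero_le hk hx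
  rcases (l2_nonneg y).eq_or_lt with hy0 | hy0
  · rw [← hy0, mul_zero]
    exact mul_nonneg hδ2k (l1_nonneg x)
  have hy : (1 - δk) * l2 y ≤ δ2k * tail := le_of_mul_le_mul_right (by nlinarith) hy0
  calc (1 - δk) * √k * l2 y = √k * ((1 - δk) * l2 y) := by ring
    _ ≤ √k * (δ2k * tail) := by gcongr
    _ = δ2k * (√k * tail) := by ring
    _ ≤ δ2k * l1 x := by gcongr; exact sqrt_mul_sum_l2_restr_shell_succ_le hk x

end Shelling

theorem stmt1_general {N d k : ℕ} (B : Matrix (Fin N) (Fin d) ℝ) (δk δ2k : ℝ)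
    (hδk1 : δk < 1) (hδ2k0 : 0 ≤ δ2k)
    (hRk : RIP B k δk) (hR2k : RIP B (2 * k) δ2k)
    (x : Fin d → ℝ) (hker : B.mulVec x = 0)
    (U : Finset (Fin d)) (hU : U.card = k) :
    l2 (restr U x) ≤ (δ2k / (1 - δk)) * (1 / Real.sqrt k) * l1 x := by
  rcases k.eq_zero_or_pos with rfl | hk
  · simp [card_eq_zero.1 hU, restr, l2]
  have hshell := hRk.one_sub_mul_sqrt_mul_l2_restr_shell_zero_le hk hR2k hδ2k0 hker
  have hpos : 0 < (1 - δk) * √k :=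
    mul_pos (sub_pos.2 hδk1) (Real.sqrt_pos.2 (by exact_mod_cast hk))
  calc l2 (restr U x) ≤ l2 (restr (shell x k 0) x) := l2_restr_le_l2_restr_shell_zero hk hU.le
    _ ≤ δ2k * l1 x / ((1 - δk) * √k) := by
        rw [le_div_iff₀ hpos]
        linarith
    _ = δ2k / (1 - δk) * (1 / √k) * l1 x := by
        field_simp

theorem stmt1 {N d k : ℕ} (B : Matrix (Fin N) (Fin d) ℝ) (δk δ2k : ℝ)
    (hδk0 : 0 ≤ δk) (hδk1 : δk < 1) (hδ2k0 : 0 ≤ δ2k) (hδ2k1 : δ2k < 1)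
    (hRk : RIP B k δk) (hR2k : RIP B (2 * k) δ2k)
    (x : Fin d → ℝ) (hker : B.mulVec x = 0) (hx : x ≠ 0)
    (U : Finset (Fin d)) (hU : U.card = k) :
    l2 (restr U x) ≤ (δ2k / (1 - δk)) * (1 / Real.sqrt k) * l1 x :=
  stmt1_general B δk δ2k hδk1 hδ2k0 hRk hR2k x hker U hU
end

section
/- For any integer s ≥ 1, the intersection of the ℓ₁-ball of radius √s and the ℓ₂-ball of radius 1 in ℝ^d is contained in the closure of the convex hull of the set of s-sparse vectors of ℓ₂-norm at most 3. That is, B₁(√s) ∩ B₂(1) ⊆ cl(conv(B₀(s) ∩ B₂(3))). -/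
open Finset Matrix

/-!
If `x` were outside the closed convex hull, Hahn–Banach would give a functional
`v ↦ ∑ i, v i * z i` strictly separating `x` from the sparse set. Let `S` collect the `s`
coordinates of largest `|z i|` and put `r = ‖z_S‖₂`. On `S`, Cauchy–Schwarz bounds `x`'s
contribution by `r`; off `S` every `|z i|` is at most `r / √s`, so `‖x‖₁ ≤ √s` bounds the rest
by `r` as well. But the `s`-sparse vector `3 z_S / r` of norm `3` reaches the value `3 r ≥ 2 r`.
-/

variable {ι : Type*} [Fintype ι]

theorem sparse_of_forall_notMem_eq_zero {m : ℕ} {x : ι → ℝ} {S : Finset ι} (hS : #S ≤ m)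
    (hx : ∀ i ∉ S, x i = 0) : sparse m x := by
  refine le_trans (card_le_card fun i hi => ?_) hS
  by_contra h
  exact (mem_filter.1 hi).2 (hx i h)

theorem exists_card_eq_forall_notMem_le (g : ι → ℝ) {k : ℕ} (hk : k ≤ Fintype.card ι) :
    ∃ S : Finset ι, #S = k ∧ ∀ i ∉ S, ∀ j ∈ S, g i ≤ g j := by
  classical
  obtain ⟨S, hS_mem, hS_max⟩ := (powersetCard k univ).exists_max_image (fun S => ∑ i ∈ S, g i)
    (powersetCard_nonempty.2 (by simpa using hk))
  have hS : #S = k := (mem_powersetCard.1 hS_mem).2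
  refine ⟨S, hS, fun i hi j hj => ?_⟩
  -- `S` maximises `∑ i ∈ S, g i` among `k`-sets, so swapping `j` out for `i` cannot help.
  have hi' : i ∉ S.erase j := fun h => hi (mem_of_mem_erase h)
  have hswap := hS_max (insert i (S.erase j)) <| mem_powersetCard.2 ⟨subset_univ _, by
    rw [card_insert_of_notMem hi', card_erase_of_mem hj, hS]
    have := card_pos.2 ⟨j, hj⟩
    omega⟩
  rw [sum_insert hi', ← add_sum_erase S g hj] at hswap
  linarith

theorem exists_card_le_forall_notMem_mul_sq_le (z : ι → ℝ) (s : ℕ) :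
    ∃ S : Finset ι, #S ≤ s ∧ ∀ i ∉ S, s * z i ^ 2 ≤ ∑ j ∈ S, z j ^ 2 := by
  obtain ⟨S, hS, hS_top⟩ :=
    exists_card_eq_forall_notMem_le (fun i => z i ^ 2) (min_le_right s (Fintype.card ι))
  refine ⟨S, hS ▸ min_le_left _ _, fun i hi => ?_⟩
  have hS_s : #S = s := by
    have := card_lt_univ_of_notMem hi
    omega
  calc (s : ℝ) * z i ^ 2 = ∑ _j ∈ S, z i ^ 2 := by simp [hS_s]
    _ ≤ ∑ j ∈ S, z j ^ 2 := sum_le_sum (hS_top i hi)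

theorem sum_compl_mul_le_sqrt [DecidableEq ι] {x z : ι → ℝ} {s : ℕ} {S : Finset ι}
    (hx : l1 x ≤ √s) (hS : ∀ i ∉ S, s * z i ^ 2 ≤ ∑ j ∈ S, z j ^ 2) :
    ∑ i ∈ Sᶜ, x i * z i ≤ √(∑ j ∈ S, z j ^ 2) := by
  set r := √(∑ j ∈ S, z j ^ 2)
  have habs_le : ∀ i, |x i| ≤ l1 x := fun i =>
    single_le_sum (fun j _ => abs_nonneg (x j)) (mem_univ i)
  rcases Nat.eq_zero_or_pos s with rfl | hs
  · have hx0 : ∀ i, x i = 0 := fun i =>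
      abs_nonpos_iff.1 ((habs_le i).trans (by simpa using hx))
    simp only [hx0, zero_mul, sum_const_zero]
    exact Real.sqrt_nonneg _
  have hs' : 0 < √s := Real.sqrt_pos.2 (by exact_mod_cast hs)
  have hz : ∀ i ∉ S, |z i| ≤ r / √s := fun i hi => by
    rw [le_div_iff₀ hs', mul_comm, ← Real.sqrt_sq_eq_abs, ← Real.sqrt_mul (Nat.cast_nonneg s)]
    exact Real.sqrt_le_sqrt (hS i hi)
  calc ∑ i ∈ Sᶜ, x i * z i ≤ ∑ i ∈ Sᶜ, |x i| * (r / √s) := sum_le_sum fun i hi =>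
        (le_abs_self _).trans <| (abs_mul _ _).trans_le <|
          mul_le_mul_of_nonneg_left (hz i (mem_compl.1 hi)) (abs_nonneg _)
    _ ≤ l1 x * (r / √s) := by
        rw [← sum_mul]
        gcongr
        exact sum_le_univ_sum_of_nonneg fun i => abs_nonneg _
    _ ≤ √s * (r / √s) := by gcongr
    _ = r := mul_div_cancel₀ r hs'.ne'

theorem sum_mul_le_two_mul_sqrt [DecidableEq ι] {x z : ι → ℝ} {s : ℕ} {S : Finset ι}
    (hx₁ : l1 x ≤ √s) (hx₂ : l2 x ≤ 1) (hS : ∀ i ∉ S, s * z i ^ 2 ≤ ∑ j ∈ S, z j ^ 2) :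
    ∑ i, x i * z i ≤ 2 * √(∑ j ∈ S, z j ^ 2) := by
  have hx₂S : √(∑ i ∈ S, x i ^ 2) ≤ 1 :=
    (Real.sqrt_le_sqrt (sum_le_univ_sum_of_nonneg fun i => sq_nonneg (x i))).trans hx₂
  have hS_part : ∑ i ∈ S, x i * z i ≤ √(∑ j ∈ S, z j ^ 2) :=
    calc ∑ i ∈ S, x i * z i ≤ √(∑ i ∈ S, x i ^ 2) * √(∑ j ∈ S, z j ^ 2) :=
          Real.sum_mul_le_sqrt_mul_sqrt S x z
      _ ≤ √(∑ j ∈ S, z j ^ 2) := mul_le_of_le_one_left (Real.sqrt_nonneg _) hx₂S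
  rw [← sum_add_sum_compl S]
  linarith [sum_compl_mul_le_sqrt hx₁ hS]

theorem exists_sparse_l2_le_sum_mul_eq {s : ℕ} {S : Finset ι} (hS : #S ≤ s) (z : ι → ℝ)
    {c : ℝ} (hc : 0 ≤ c) :
    ∃ y : ι → ℝ, sparse s y ∧ l2 y ≤ c ∧ ∑ i, y i * z i = c * √(∑ j ∈ S, z j ^ 2) := by
  classical
  set r := √(∑ j ∈ S, z j ^ 2)
  have hr : ∑ j ∈ S, z j ^ 2 = r ^ 2 := (Real.sq_sqrt (sum_nonneg fun j _ => sq_nonneg (z j))).symm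
  -- For `r = 0` the junk value `c / 0 = 0` makes this `y = 0`.
  refine ⟨fun i => if i ∈ S then c / r * z i else 0,
    sparse_of_forall_notMem_eq_zero hS fun i hi => if_neg hi, ?_, ?_⟩
  · have hsum : ∑ i, (if i ∈ S then c / r * z i else 0) ^ 2 = (c / r) ^ 2 * r ^ 2 := by
      simp [ite_pow, sum_ite_mem, mul_pow, ← mul_sum, hr]
    rw [l2, hsum, Real.sqrt_le_left hc]
    rcases eq_or_ne r 0 with h | h
    · simpa [h] using sq_nonneg c
    · rw [div_pow, div_mul_cancel₀ _ (pow_ne_zero 2 h)]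
  · simp only [ite_mul, zero_mul, sum_ite_mem, univ_inter, mul_assoc, ← mul_sum, ← pow_two, hr]
    rcases eq_or_ne r 0 with h | h
    · simp [h]
    · field_simp

theorem stmt2_general {d : ℕ} (s : ℕ) :
    {x : Fin d → ℝ | l1 x ≤ Real.sqrt s} ∩ {x | l2 x ≤ 1} ⊆
      closure (convexHull ℝ ({x : Fin d → ℝ | sparse s x} ∩ {x | l2 x ≤ 3})) := by
  rintro x ⟨hx₁, hx₂⟩
  by_contra hx
  obtain ⟨f, u, hf_lt, hu_lt⟩ :=
    geometric_hahn_banach_closed_point (convex_convexHull ℝ _).closure isClosed_closure hx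
  set z : Fin d → ℝ := fun i => f fun j => if i = j then 1 else 0
  have hf : ∀ v, f v = ∑ i, v i * z i := fun v => by
    simpa using LinearMap.pi_apply_eq_sum_univ (f : (Fin d → ℝ) →ₗ[ℝ] ℝ) v
  obtain ⟨S, hS_card, hS⟩ := exists_card_le_forall_notMem_mul_sq_le z s
  obtain ⟨y, hy_sparse, hy_l2, hy⟩ := exists_sparse_l2_le_sum_mul_eq hS_card z zero_le_three
  have hfy := hf_lt y (subset_closure (subset_convexHull ℝ _ ⟨hy_sparse, hy_l2⟩))
  rw [hf] at hfy hu_lt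
  linarith [sum_mul_le_two_mul_sqrt hx₁ hx₂ hS, Real.sqrt_nonneg (∑ j ∈ S, z j ^ 2)]

theorem stmt2 {d : ℕ} (s : ℕ) (hs : 1 ≤ s) :
    {x : Fin d → ℝ | l1 x ≤ Real.sqrt s} ∩ {x | l2 x ≤ 1} ⊆
      closure (convexHull ℝ ({x : Fin d → ℝ | sparse s x} ∩ {x | l2 x ≤ 3})) :=
  stmt2_general s
end

section
/- Suppose A ∈ ℝ^{N×d} satisfies the Robust Null Space Property with respect to S with parameters ρ < 1 and τ ≥ 0. Let y = A x⋆ + e with ‖e‖₂ ≤ η, and let x be any minimizer of ‖x‖₁ subject to ‖Ax − y‖₂ ≤ η. Then ‖x − x⋆‖₁ ≤ (2(1+ρ)/(1−ρ))‖(x⋆)_{S^c}‖₁ + (4τ/(1−ρ))η. -/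
open Finset Matrix

lemma l2_eq_norm {ι : Type*} [Fintype ι] (v : ι → ℝ) :
    l2 v = ‖(WithLp.equiv 2 (ι → ℝ)).symm v‖ := by
  rw [EuclideanSpace.norm_eq]
  simp [l2, sq_abs]

lemma l2_add_le {ι : Type*} [Fintype ι] (a b : ι → ℝ) :
    l2 (a + b) ≤ l2 a + l2 b := by
  simp only [l2_eq_norm]
  exact norm_add_le _ _

lemma l1_split {d : ℕ} (S : Finset (Fin d)) (z : Fin d → ℝ) :
    l1 z = l1 (restr S z) + l1 (restr Sᶜ z) := by
  simp only [l1, restr, apply_ite, abs_zero, Finset.sum_ite_mem,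
    Finset.univ_inter]
  rw [← Finset.sum_add_sum_compl S]

lemma l1_restr_sub_le {d : ℕ} (T : Finset (Fin d)) (a b : Fin d → ℝ) :
    l1 (restr T a) - l1 (restr T b) ≤ l1 (restr T (a - b)) := by
  rw [sub_le_iff_le_add]
  simp only [l1, ← Finset.sum_add_distrib]
  apply Finset.sum_le_sum
  intro i _
  simp only [restr, Pi.sub_apply]
  split
  · exact sub_le_iff_le_add.mp (abs_sub_abs_le_abs_sub _ _)
  · simp

theorem stmt5 {N d : ℕ} (A : Matrix (Fin N) (Fin d) ℝ) (S : Finset (Fin d))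
    (ρ τ η : ℝ) (hρ0 : 0 ≤ ρ) (hρ1 : ρ < 1) (hτ0 : 0 ≤ τ) (hη0 : 0 ≤ η)
    (hRNSP : ∀ z : Fin d → ℝ,
      l1 (restr S z) ≤ ρ * l1 (restr Sᶜ z) + τ * l2 (A.mulVec z))
    (xstar : Fin d → ℝ) (e y : Fin N → ℝ)
    (hy : y = A.mulVec xstar + e) (he : l2 e ≤ η)
    (x : Fin d → ℝ) (hfeas : l2 (A.mulVec x - y) ≤ η)
    (hmin : ∀ z : Fin d → ℝ, l2 (A.mulVec z - y) ≤ η → l1 x ≤ l1 z) :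
    l1 (x - xstar) ≤ (2 * (1 + ρ) / (1 - ρ)) * l1 (restr Sᶜ xstar)
      + (4 * τ / (1 - ρ)) * η := by
  set v := x - xstar with hv
  have hAv : l2 (A.mulVec v) ≤ 2 * η := by
    have heq : A.mulVec v = (A.mulVec x - y) + e := by
      rw [hv, Matrix.mulVec_sub, hy]; abel
    rw [heq]
    calc l2 ((A.mulVec x - y) + e) ≤ l2 (A.mulVec x - y) + l2 e := l2_add_le _ _
      _ ≤ 2 * η := by linarith
  have hfeasstar : l2 (A.mulVec xstar - y) ≤ η := by
    have : A.mulVec xstar - y = -e := by rw [hy]; abel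
    rw [this]
    calc l2 (-e) = l2 e := by simp [l2]
      _ ≤ η := he
  have hminle : l1 x ≤ l1 xstar := hmin xstar hfeasstar
  have hNSP := hRNSP v
  have h1 : l1 (restr S xstar) - l1 (restr S v) ≤ l1 (restr S x) := by
    have := l1_restr_sub_le S xstar x
    have hneg : restr S (xstar - x) = restr S (-(v)) := by
      rw [hv]; congr 1; abel
    have hln : l1 (restr S (xstar - x)) = l1 (restr S v) := by
      rw [hneg]; simp [l1, restr, apply_ite]
    linarith
  have h2 : l1 (restr Sᶜ v) - l1 (restr Sᶜ xstar) ≤ l1 (restr Sᶜ x) := by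
    have h := l1_restr_sub_le Sᶜ v (-xstar)
    have heq : restr Sᶜ (v - -xstar) = restr Sᶜ x := by
      rw [hv]; congr 1; funext i; simp
    have hln : l1 (restr Sᶜ (-xstar)) = l1 (restr Sᶜ xstar) := by
      simp [l1, restr, apply_ite]
    rw [heq, hln] at h
    linarith
  have hsplit := l1_split S v
  have hsx := l1_split S x
  have hsxs := l1_split S xstar
  have hnn : 0 ≤ l1 (restr Sᶜ xstar) := Finset.sum_nonneg fun i _ => abs_nonneg _
  have hnna : 0 ≤ l1 (restr S v) := Finset.sum_nonneg fun i _ => abs_nonneg _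
  have hnnb : 0 ≤ l1 (restr Sᶜ v) := Finset.sum_nonneg fun i _ => abs_nonneg _
  have ha : l1 (restr S v) ≤ ρ * l1 (restr Sᶜ v) + 2 * τ * η := by
    have : τ * l2 (A.mulVec v) ≤ τ * (2 * η) := by
      exact mul_le_mul_of_nonneg_left hAv hτ0
    linarith
  have hb : l1 (restr Sᶜ v) ≤ l1 (restr S v) + 2 * l1 (restr Sᶜ xstar) := by
    linarith
  have h1ρ : 0 < 1 - ρ := by linarith
  rw [hsplit, div_mul_eq_mul_div, div_mul_eq_mul_div, ← add_div,
    le_div_iff₀ h1ρ]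
  nlinarith [mul_le_mul_of_nonneg_left hb hρ0, mul_nonneg hτ0 hη0]
end

section
/- Let A ∈ ℝ^{N×d}, S ⊆ {1,…,d}, and suppose A satisfies the Restricted Null Space Property with constant c < 1/2, i.e., ‖x_S‖₁ ≤ c‖x‖₁ for all x ∈ Ker(A) \ {0}. Then for any x⋆ supported on S with y = Ax⋆, every minimizer x̂ of ‖x‖₁ subject to Ax = y equals x⋆. -/
open Finset Matrix

theorem stmt16 {N d : ℕ} (A : Matrix (Fin N) (Fin d) ℝ) (S : Finset (Fin d))
    (c : ℝ) (hc0 : 0 ≤ c) (hc : c < 1 / 2)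
    (hNSP : ∀ x : Fin d → ℝ, A.mulVec x = 0 → x ≠ 0 → l1 (restr S x) ≤ c * l1 x)
    (xstar : Fin d → ℝ) (hsupp : ∀ i, i ∉ S → xstar i = 0)
    (xhat : Fin d → ℝ) (hfeas : A.mulVec xhat = A.mulVec xstar)
    (hmin : ∀ z : Fin d → ℝ, A.mulVec z = A.mulVec xstar → l1 xhat ≤ l1 z) :
    xhat = xstar := by
  by_contra hne
  set h : Fin d → ℝ := xhat - xstar with hh
  have hker : A.mulVec h = 0 := by
    rw [hh, Matrix.mulVec_sub, hfeas, sub_self]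
  have hne0 : h ≠ 0 := by
    intro h0
    exact hne (sub_eq_zero.mp (by rw [← hh, h0]))
  have hnsp := hNSP h hker hne0
  set a := ∑ i ∈ S, |h i| with ha
  set b := ∑ i ∈ Sᶜ, |h i| with hb
  have hl1h : l1 h = a + b := by
    rw [ha, hb, l1, ← Finset.sum_add_sum_compl S]
  have hrestr : l1 (restr S h) = a := by
    rw [l1, ha]
    rw [show (fun i => |restr S h i|) = fun i => |if i ∈ S then h i else 0| from rfl]
    rw [← Finset.sum_add_sum_compl S (fun i => |if i ∈ S then h i else 0|)]
    have h1 : ∑ i ∈ S, |if i ∈ S then h i else 0| = a :=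
      Finset.sum_congr rfl (fun i hi => by simp [hi])
    have h2 : ∑ i ∈ Sᶜ, |if i ∈ S then h i else 0| = 0 :=
      Finset.sum_eq_zero (fun i hi => by simp [Finset.mem_compl.mp hi])
    rw [h1, h2, add_zero]
  have ha0 : 0 ≤ a := Finset.sum_nonneg fun i _ => abs_nonneg _
  have hb0 : 0 ≤ b := Finset.sum_nonneg fun i _ => abs_nonneg _
  have habpos : 0 < a + b := by
    rcases lt_or_eq_of_le (by positivity : (0:ℝ) ≤ a + b) with hp | hp
    · exact hp
    · exfalso
      apply hne0
      have hsum0 : ∑ i, |h i| = 0 := by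
        rw [← Finset.sum_add_sum_compl S, ← ha, ← hb, ← hp]
      funext i
      have := (Finset.sum_eq_zero_iff_of_nonneg
        (fun j _ => abs_nonneg (h j))).mp hsum0 i (Finset.mem_univ i)
      simpa using abs_eq_zero.mp this
  have hab : a < b := by
    have : a ≤ c * (a + b) := by rw [← hl1h, ← hrestr]; exact hnsp
    nlinarith
  -- l1 xhat ≥ l1 xstar - a + b
  have hxhat : l1 xhat = ∑ i ∈ S, |xstar i + h i| + b := by
    rw [l1, ← Finset.sum_add_sum_compl S]
    congr 1
    · exact Finset.sum_congr rfl fun i _ => by simp [hh]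
    · exact Finset.sum_congr rfl fun i hi => by
        simp [hh, hsupp i (Finset.mem_compl.mp hi)]
  have hxstar : l1 xstar = ∑ i ∈ S, |xstar i| := by
    rw [l1, ← Finset.sum_add_sum_compl S]
    have : ∑ i ∈ Sᶜ, |xstar i| = 0 :=
      Finset.sum_eq_zero fun i hi => by simp [hsupp i (Finset.mem_compl.mp hi)]
    rw [this, add_zero]
  have hkey : l1 xstar - a ≤ ∑ i ∈ S, |xstar i + h i| := by
    rw [hxstar, ha, ← Finset.sum_sub_distrib]
    exact Finset.sum_le_sum fun i _ => by
      have := abs_add_le (xstar i + h i) (-h i)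
      simp at this
      linarith [this]
  have hlt : l1 xstar < l1 xhat := by
    rw [hxhat]; linarith
  exact absurd (hmin xstar rfl) (not_le.mpr hlt)
end
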